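/- arXiv:1905.08294 — 2 statements merged into one kernel-verified Lean document; each statement's English description precedes it below -/
import Mathlib

section
/- If φ(x;y) is an equation for T, then the formula φ⁻¹(x;y) := φ(y;x) (with the roles of the variable tuples swapped) is also an equation for T. -/
/-!
A failure of the chain condition for `φ⁻¹` yields tuples with `φ(aⱼ, cᵢ)` for `j < i` and
`¬φ(aᵢ, cᵢ)`. This is a failure for `φ` with the order of the indices reversed, and compactness
reverses it back: in a nonprincipal ultrapower the tuples `aᵢ' = [n ↦ a_{n-i}]` and
`cⱼ' = [n ↦ c_{n-j}]` satisfy `φ(aᵢ', cⱼ')` for `j < i`, since then `n - i < n - j` for almost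
all `n`, while `¬φ(aᵢ', cᵢ')`.
-/

open FirstOrder FirstOrder.Language Set

universe u v w

namespace Equationality

variable {L : FirstOrder.Language.{u, v}}

section Struc
variable {M : Type w} [L.Structure M]

/-- The instance of the formula `φ(x; y)` at the parameter tuple `b`. -/
def instSet {α β : Type*} (φ : L.Formula (α ⊕ β)) (b : β → M) : Set (α → M) :=
  {a | φ.Realize (Sum.elim a b)}

/-- A sequence of `γ`-tuples indexed by a linear order is indiscernible if any two strictly
increasing finite subsequences satisfy the same formulas. -/
def IsIndiscernible {I : Type*} [LinearOrder I] {γ : Type*} (a : I → γ → M) : Prop :=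
  ∀ (n : ℕ) (i j : Fin n → I), StrictMono i → StrictMono j →
    ∀ φ : L.Formula (Fin n × γ),
      φ.Realize (fun p => a (i p.1) p.2) ↔ φ.Realize (fun p => a (j p.1) p.2)

/-- The complete type of a tuple over `∅`, as the set of formulas it realizes. -/
def typeOf {γ : Type*} (a : γ → M) : Set (L.Formula γ) := {φ | φ.Realize a}

def IsLadder {α β : Type*} (ψ : L.Formula (α ⊕ β)) (a : ℕ → α → M) (b : ℕ → β → M) : Prop :=
  (∀ i j, j < i → ψ.Realize (Sum.elim (a i) (b j))) ∧ ∀ i, ¬ψ.Realize (Sum.elim (a i) (b i))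

theorem exists_isLadder_of_strictAnti {α β : Type*} {ψ : L.Formula (α ⊕ β)}
    {B : ℕ → Finset (β → M)} (hB : StrictAnti fun k => ⋂ b ∈ B k, instSet ψ b) :
    ∃ (a : ℕ → α → M) (b : ℕ → β → M), IsLadder ψ a b := by
  have hdrop : ∀ k, ∃ x ∈ ⋂ b ∈ B k, instSet ψ b, ∃ y ∈ B (k + 1),
      ¬ψ.Realize (Sum.elim x y) := fun k => by
    obtain ⟨x, hxk, hxk₁⟩ := Set.exists_of_ssubset (hB k.lt_succ_self)
    simp only [Set.mem_iInter₂, not_forall] at hxk₁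
    obtain ⟨y, hy, hxy⟩ := hxk₁
    exact ⟨x, hxk, y, hy, hxy⟩
  choose x hx y hy hxy using hdrop
  refine ⟨x, y, fun i j hji => ?_, hxy⟩
  exact Set.mem_iInter₂.1 (hB.antitone (Nat.succ_le_of_lt hji) (hx i)) (y j) (hy j)

end Struc

theorem _root_.Antitone.exists_strictAnti_comp_of_not_stabilizes {γ : Type*} [PartialOrder γ]
    {X : ℕ → γ} (hX : Antitone X) (h : ¬∃ N, ∀ n, N ≤ n → X n = X N) :
    ∃ f : ℕ → ℕ, StrictAnti (X ∘ f) := by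
  simp only [not_exists, not_forall] at h
  choose g hg hne using h
  refine ⟨fun k => g^[k] 0, strictAnti_nat_of_succ_lt fun k => ?_⟩
  simp only [Function.comp_apply, Function.iterate_succ_apply']
  exact lt_of_le_of_ne (hX (hg _)) (hne _)

instance ultraproduct_model {ι : Type*} (U : Ultrafilter ι) {M : ι → Type*}
    [∀ i, L.Structure (M i)] [∀ i, Nonempty (M i)] {T : L.Theory} [∀ i, M i ⊨ T] :
    (U : Filter ι).Product M ⊨ T :=
  (Theory.model_iff _).2 fun _ hψ => (Ultraproduct.sentence_realize _).2 <|
    Filter.Eventually.of_forall fun _ => Theory.realize_sentence_of_mem T hψ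

variable (T : L.Theory)

/-- `φ(x; y)` is an equation for `T`: in every model of `T`, the family of finite
intersections of instances of `φ` has the descending chain condition. -/
def IsEquation {α β : Type*} (φ : L.Formula (α ⊕ β)) : Prop :=
  ∀ (M : Theory.ModelType.{u, v, max u v} T) (B : ℕ → Finset (β → M)),
    (Antitone fun n => ⋂ b ∈ B n, instSet φ b) →
    ∃ N, ∀ n, N ≤ n → (⋂ b ∈ B n, instSet φ b) = ⋂ b ∈ B N, instSet φ b

/-- A complete type over `∅` (in the variables `γ`), presented as the set of formulas
realized by some tuple in some model of `T`. -/
def IsRealizedType {γ : Type*} (p : Set (L.Formula γ)) : Prop :=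
  ∃ (M : Theory.ModelType.{u, v, max u v} T) (a : γ → M), typeOf a = p

/-- `p ⟶ q`: there are a model of `T`, a tuple `b` and an indiscernible sequence `(aᵢ)`
with `aᵢ ⊨ p(x, b)` for `i > 0` and `a₀ ⊨ q(x, b)`. -/
def Pf {α β : Type*} (p q : Set (L.Formula (α ⊕ β))) : Prop :=
  ∃ (M : Theory.ModelType.{u, v, max u v} T) (b : β → M) (a : ℕ → α → M),
    IsIndiscernible (L := L) a ∧ (∀ i : ℕ, 0 < i → typeOf (Sum.elim (a i) b) = p) ∧
      typeOf (Sum.elim (a 0) b) = q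

variable {T}

theorem exists_isLadder_of_not_isEquation {α β : Type*} {ψ : L.Formula (α ⊕ β)}
    (h : ¬IsEquation T ψ) :
    ∃ (M : Theory.ModelType.{u, v, max u v} T) (a : ℕ → α → M) (b : ℕ → β → M),
      IsLadder ψ a b := by
  simp only [IsEquation, not_forall] at h
  obtain ⟨M, B, hanti, hne⟩ := h
  obtain ⟨f, hf⟩ := hanti.exists_strictAnti_comp_of_not_stabilizes hne
  exact ⟨M, exists_isLadder_of_strictAnti (B := B ∘ f) hf⟩

theorem not_isEquation_of_isLadder {α β : Type*} {ψ : L.Formula (α ⊕ β)}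
    {M : Theory.ModelType.{u, v, max u v} T} {a : ℕ → α → M} {b : ℕ → β → M}
    (h : IsLadder ψ a b) : ¬IsEquation T ψ := by
  classical
  intro hψ
  let B : ℕ → Finset (β → M) := fun n => (Finset.range n).image b
  have hB : Antitone fun n => ⋂ c ∈ B n, instSet ψ c := fun m n hmn =>
    Set.biInter_subset_biInter_left <| Finset.coe_subset.2 <|
      Finset.image_subset_image (f := b) (Finset.range_subset_range.2 hmn)
  obtain ⟨N, hN⟩ := hψ M B hB
  have hin : a N ∈ ⋂ c ∈ B N, instSet ψ c := by
    simpa [B, instSet] using fun j hj => h.1 N j hj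
  have hout : a N ∉ ⋂ c ∈ B (N + 1), instSet ψ c := by
    simpa [B, instSet] using ⟨N, le_rfl, h.2 N⟩
  exact hout (hN (N + 1) N.le_succ ▸ hin)

theorem exists_isLadder_of_isLadder_relabel_swap {α β : Type*} {φ : L.Formula (α ⊕ β)}
    {M : Theory.ModelType.{u, v, max u v} T} {c : ℕ → β → M} {a : ℕ → α → M}
    (h : IsLadder (φ.relabel Sum.swap) c a) :
    ∃ (N : Theory.ModelType.{u, v, max u v} T) (a' : ℕ → α → N) (c' : ℕ → β → N),
      IsLadder φ a' c' := by
  obtain ⟨hpos, hneg⟩ := h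
  simp only [Formula.realize_relabel, Sum.elim_swap] at hpos hneg
  let U : Ultrafilter ℕ := Filter.hyperfilter ℕ
  let N := (U : Filter ℕ).Product fun _ : ℕ => (M : Type (max u v))
  let a' : ℕ → α → N := fun i x => ((fun n => a (n - i) x : ℕ → M) : N)
  let c' : ℕ → β → N := fun j y => ((fun n => c (n - j) y : ℕ → M) : N)
  have hreal : ∀ i j, φ.Realize (Sum.elim (a' i) (c' j)) ↔
      ∀ᶠ n in (U : Filter ℕ), φ.Realize (Sum.elim (a (n - i)) (c (n - j))) := fun i j => by
    refine Iff.trans ?_ (Ultraproduct.realize_formula_cast (u := U) φ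
      fun s n => Sum.elim (a (n - i)) (c (n - j)) s)
    congr! 1
    ext (x | y) <;> rfl
  refine ⟨Theory.ModelType.of T N, a', c', fun i j hji => (hreal i j).2 ?_, fun i hi => ?_⟩
  · exact ((Filter.eventually_ge_atTop i).filter_mono Nat.hyperfilter_le_atTop).mono
      fun n hn => hpos _ _ (by omega)
  · obtain ⟨n, hn⟩ := ((hreal i i).1 hi).exists
    exact hneg _ hn

theorem isEquation_swap_general {α β : Type (max u v)}
    (φ : L.Formula (α ⊕ β)) (h : IsEquation T φ) :
    IsEquation T (φ.relabel (Sum.swap : α ⊕ β → β ⊕ α)) := by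
  by_contra hswap
  obtain ⟨M, c, a, hladder⟩ := exists_isLadder_of_not_isEquation hswap
  obtain ⟨N, a', c', hladder'⟩ := exists_isLadder_of_isLadder_relabel_swap hladder
  exact not_isEquation_of_isLadder hladder' h

/-- If `φ(x; y)` is an equation for `T`, then the formula `φ⁻¹(x; y) := φ(y; x)`,
with the roles of the variable tuples swapped, is also an equation for `T`. -/
theorem isEquation_swap {α β : Type (max u v)} [Finite α] [Finite β]
    (φ : L.Formula (α ⊕ β)) (h : IsEquation T φ) :
    IsEquation T (φ.relabel (Sum.swap : α ⊕ β → β ⊕ α)) :=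
  isEquation_swap_general φ h

end Equationality
end

section
/- Every equational complete theory is indiscernibly acyclic: if p_0 ⟶ p_1 ⟶ ... ⟶ p_{n-1} ⟶ p_0 is a cycle of complete types over ∅ in an equational theory, then all the p_i are equal. -/
open FirstOrder FirstOrder.Language Set

universe u v w

namespace Equationality

variable {L : FirstOrder.Language.{u, v}}

variable (T : L.Theory)

/-- Boolean combinations of equations for `T`. -/
inductive IsBoolCombOfEquations {α β : Type*} :
    L.Formula (α ⊕ β) → Prop
  | of_equation (φ : L.Formula (α ⊕ β)) : IsEquation T φ → IsBoolCombOfEquations φ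
  | not (φ : L.Formula (α ⊕ β)) : IsBoolCombOfEquations φ → IsBoolCombOfEquations φ.not
  | inf (φ ψ : L.Formula (α ⊕ β)) :
      IsBoolCombOfEquations φ → IsBoolCombOfEquations ψ → IsBoolCombOfEquations (φ ⊓ ψ)
  | sup (φ ψ : L.Formula (α ⊕ β)) :
      IsBoolCombOfEquations φ → IsBoolCombOfEquations ψ → IsBoolCombOfEquations (φ ⊔ ψ)

/-- `T` is equational if every formula `ψ(x; y)` (in finite tuples of variables) is equivalent
modulo `T` to a Boolean combination of equations `φ(x; y)`. -/
def IsEquational : Prop :=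
  ∀ (n m : ℕ) (ψ : L.Formula (Fin n ⊕ Fin m)),
    ∃ χ : L.Formula (Fin n ⊕ Fin m), IsBoolCombOfEquations T χ ∧ T.Iff ψ χ

/-!
An equation `φ(y; x)` is closed along indiscernible sequences: if `φ(b; aᵢ)` holds for all
`i > 0` but fails for `a₀`, then indiscernibility puts such a witness on every finite window
`aₛ, …, aₛ₊ₜ`, and compactness turns these windows into parameters `e₀, e₁, …` with
`⋂_{s<t} φ(M; eₛ) ⊄ φ(M; eₜ)` for every `t`: an infinite strictly descending chain of finite
intersections of instances of `φ`. Hence `p ⟶ q` carries every equation of `p` into `q`, along a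
cycle all `pᵢ` contain the same equations, and in an equational theory a type is determined by
its equations.
-/

section Descent

def StrictlyDescends {α β M : Type*} [L.Structure M] (φ : L.Formula (α ⊕ β))
    (e : ℕ → β → M) : Prop :=
  ∀ t, ∃ c : α → M, (∀ s < t, φ.Realize (Sum.elim c (e s))) ∧ ¬ φ.Realize (Sum.elim c (e t))

theorem IsEquation.not_strictlyDescends {α β : Type*} {T : L.Theory} {φ : L.Formula (α ⊕ β)}
    (hφ : IsEquation T φ) (M : Theory.ModelType.{u, v, max u v} T) (e : ℕ → β → M) :
    ¬ StrictlyDescends φ e := by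
  classical
  intro hdesc
  let B : ℕ → Finset (β → M) := fun t => (Finset.range t).image e
  have hmem : ∀ t c, c ∈ ⋂ b ∈ B t, instSet φ b ↔ ∀ s < t, φ.Realize (Sum.elim c (e s)) := by
    intro t c
    simp [B, instSet]
  have hanti : Antitone fun t => ⋂ b ∈ B t, instSet φ b := fun t t' htt' c hc =>
    (hmem t c).2 fun s hs => (hmem t' c).1 hc s (hs.trans_le htt')
  obtain ⟨N, hN⟩ := hφ M B hanti
  obtain ⟨c, hc, hnot⟩ := hdesc N
  rw [← hmem, ← hN (N + 1) N.le_succ, hmem] at hc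
  exact hnot (hc N N.lt_succ_self)

variable {α β : Type} [Finite α]

noncomputable def descentFormula (φ : L.Formula (α ⊕ β)) (t : ℕ) :
    L.Formula (Fin (t + 1) × β) :=
  Formula.iExs α <|
    Formula.iInf (fun r : Fin t => φ.relabel (Sum.elim Sum.inr fun x => Sum.inl (r.succ, x))) ⊓
      (φ.relabel (Sum.elim Sum.inr fun x => Sum.inl (0, x))).not

/-- Parameters are indexed backwards: `descentFormula` fails at the first entry of its window,
while a descending chain gains its new parameter at the end. -/
noncomputable def descentSentence (φ : L.Formula (α ⊕ β)) (t : ℕ) : L[[ℕ × β]].Sentence :=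
  Formula.equivSentence ((descentFormula φ t).relabel fun p => ((p.1.rev : ℕ), p.2))

variable {φ : L.Formula (α ⊕ β)}

theorem realize_descentFormula {M : Type*} [L.Structure M] {t : ℕ} {v : Fin (t + 1) × β → M} :
    (descentFormula φ t).Realize v ↔ ∃ c : α → M,
      (∀ r : Fin t, φ.Realize (Sum.elim c fun x => v (r.succ, x))) ∧
        ¬ φ.Realize (Sum.elim c fun x => v (0, x)) := by
  simp only [descentFormula, Formula.realize_iExs, Formula.realize_inf, Formula.realize_iInf,
    Formula.realize_not, Formula.realize_relabel, Sum.comp_elim, Sum.elim_comp_inr]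
  rfl

theorem realize_descentFormula_of_indiscernible {M : Type*} [L.Structure M]
    {a : ℕ → β → M} (ha : IsIndiscernible (L := L) a) {b : α → M}
    (hpos : ∀ i, 0 < i → φ.Realize (Sum.elim b (a i))) (hzero : ¬ φ.Realize (Sum.elim b (a 0)))
    (t s : ℕ) : (descentFormula φ t).Realize fun p : Fin (t + 1) × β => a (s + p.1) p.2 := by
  have hstart : (descentFormula φ t).Realize fun p : Fin (t + 1) × β => a p.1 p.2 :=
    realize_descentFormula.2 ⟨b, fun r => hpos _ r.succ_pos, hzero⟩
  exact (ha (t + 1) _ _ Fin.val_strictMono (fun _ _ h => Nat.add_lt_add_left h s) _).1 hstart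

theorem isSatisfiable_onTheory_union_descentSentences {T : L.Theory}
    (M : Theory.ModelType.{u, v, max u v} T) {a : ℕ → β → M} (ha : IsIndiscernible (L := L) a)
    {b : α → M} (hpos : ∀ i, 0 < i → φ.Realize (Sum.elim b (a i)))
    (hzero : ¬ φ.Realize (Sum.elim b (a 0))) :
    ((L.lhomWithConstants (ℕ × β)).onTheory T ∪ Set.range (descentSentence φ)).IsSatisfiable := by
  let T' : ℕ → L[[ℕ × β]].Theory := fun m =>
    (L.lhomWithConstants (ℕ × β)).onTheory T ∪ descentSentence φ '' Set.Iic m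
  have hmono : Monotone T' := fun m m' h =>
    Set.union_subset_union_right _ (Set.image_mono (Set.Iic_subset_Iic.2 h))
  have hunion : ⋃ m, T' m = (L.lhomWithConstants (ℕ × β)).onTheory T ∪
      Set.range (descentSentence φ) := by
    rw [← Set.union_iUnion, ← Set.image_iUnion, Set.iUnion_Iic, Set.image_univ]
  rw [← hunion, Theory.isSatisfiable_directed_union_iff hmono.directed_le]
  intro m
  let : (constantsOn (ℕ × β)).Structure M := constantsOn.structure fun q => a (m - q.1) q.2
  have hdescent : M ⊨ descentSentence φ '' Set.Iic m := by
    rw [Theory.model_iff]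
    rintro _ ⟨t, ht, rfl⟩
    rw [descentSentence, Formula.realize_equivSentence, Formula.realize_relabel]
    have hwindow : ((fun q => (L.con q : M)) ∘ fun p : Fin (t + 1) × β => ((p.1.rev : ℕ), p.2))
        = fun p => a (m - t + p.1) p.2 := by
      funext p
      show a (m - (p.1.rev : ℕ)) p.2 = _
      rw [Fin.val_rev]
      have := p.1.isLt
      have : t ≤ m := ht
      congr 1
      omega
    rw [hwindow]
    exact realize_descentFormula_of_indiscernible ha hpos hzero t (m - t)
  have : M ⊨ T' m := ((L.lhomWithConstants (ℕ × β)).onTheory_model T |>.2 M.is_model).union hdescent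
  exact Theory.Model.isSatisfiable M

theorem strictlyDescends_of_realize_descentSentence {N : Type*} [L.Structure N]
    [L[[ℕ × β]].Structure N] [(L.lhomWithConstants (ℕ × β)).IsExpansionOn N]
    (h : ∀ t, N ⊨ descentSentence φ t) : StrictlyDescends φ fun s x => (L.con (s, x) : N) := by
  intro t
  have ht := h t
  rw [descentSentence, Formula.realize_equivSentence, Formula.realize_relabel,
    realize_descentFormula] at ht
  obtain ⟨c, hholds, hfails⟩ := ht
  refine ⟨c, fun s hs => ?_, ?_⟩
  · have h := hholds (Fin.rev ⟨s, hs⟩)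
    simp only [Function.comp_apply, Fin.rev_succ, Fin.rev_rev, Fin.val_castSucc] at h
    exact h
  · simp only [Function.comp_apply, Fin.rev_zero, Fin.val_last] at hfails
    exact hfails

theorem exists_strictlyDescends_of_indiscernible {T : L.Theory}
    (M : Theory.ModelType.{u, v, max u v} T) {a : ℕ → β → M} (ha : IsIndiscernible (L := L) a)
    {b : α → M} (hpos : ∀ i, 0 < i → φ.Realize (Sum.elim b (a i)))
    (hzero : ¬ φ.Realize (Sum.elim b (a 0))) :
    ∃ (N : Theory.ModelType.{u, v, max u v} T) (e : ℕ → β → N), StrictlyDescends φ e := by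
  obtain ⟨N⟩ := isSatisfiable_onTheory_union_descentSentences M ha hpos hzero
  let : L.Structure N := (L.lhomWithConstants (ℕ × β)).reduct N
  have := LHom.isExpansionOn_reduct (L.lhomWithConstants (ℕ × β)) N
  have : N ⊨ T := ((L.lhomWithConstants (ℕ × β)).onTheory_model T).1
    (N.is_model.mono Set.subset_union_left)
  have hdesc : StrictlyDescends φ fun s x => (L.con (s, x) : N) :=
    strictlyDescends_of_realize_descentSentence fun t =>
      N.is_model.realize_of_mem _ (Or.inr ⟨t, rfl⟩)
  exact ⟨Theory.ModelType.of T N, _, hdesc⟩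

theorem IsEquation.realize_zero_of_indiscernible {T : L.Theory} (hφ : IsEquation T φ)
    (M : Theory.ModelType.{u, v, max u v} T) {a : ℕ → β → M} (ha : IsIndiscernible (L := L) a)
    {b : α → M} (hpos : ∀ i, 0 < i → φ.Realize (Sum.elim b (a i))) :
    φ.Realize (Sum.elim b (a 0)) := by
  by_contra hzero
  obtain ⟨N, e, he⟩ := exists_strictlyDescends_of_indiscernible M ha hpos hzero
  exact hφ.not_strictlyDescends N e he

end Descent

theorem relabel_mem_typeOf {M : Type*} [L.Structure M] {α β : Type*} {φ : L.Formula α}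
    {g : α → β} {v : β → M} : φ.relabel g ∈ typeOf v ↔ φ.Realize (v ∘ g) :=
  Formula.realize_relabel

theorem Pf.relabel_swap_mem {T : L.Theory} {α β : Type} [Finite β]
    {p q : Set (L.Formula (α ⊕ β))} (hpq : Pf T p q) {φ : L.Formula (β ⊕ α)}
    (hφ : IsEquation T φ) (hp : φ.relabel Sum.swap ∈ p) : φ.relabel Sum.swap ∈ q := by
  obtain ⟨M, b, a, ha, hpos, hzero⟩ := hpq
  rw [← hzero, relabel_mem_typeOf, Sum.elim_swap]
  refine hφ.realize_zero_of_indiscernible M ha fun i hi => ?_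
  rwa [← Sum.elim_swap, ← relabel_mem_typeOf, hpos i hi]

theorem IsBoolCombOfEquations.realize_iff {T : L.Theory} {α β : Type*} {M N : Type*}
    [L.Structure M] [L.Structure N] {v : α ⊕ β → M} {w : α ⊕ β → N}
    (h : ∀ φ, IsEquation T φ → (φ.Realize v ↔ φ.Realize w)) {χ : L.Formula (α ⊕ β)}
    (hχ : IsBoolCombOfEquations T χ) : χ.Realize v ↔ χ.Realize w := by
  induction hχ with
  | of_equation φ hφ => exact h φ hφ
  | not φ _ ih => simp only [Formula.realize_not, ih]
  | inf φ ψ _ _ ihφ ihψ => simp only [Formula.realize_inf, ihφ, ihψ]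
  | sup φ ψ _ _ ihφ ihψ => simp only [Formula.realize_sup, ihφ, ihψ]

theorem IsEquational.eq_of_relabel_swap_mem_iff {T : L.Theory} (hT : IsEquational T) {k l : ℕ}
    {p q : Set (L.Formula (Fin k ⊕ Fin l))} (hp : IsRealizedType T p) (hq : IsRealizedType T q)
    (h : ∀ φ : L.Formula (Fin l ⊕ Fin k), IsEquation T φ →
      (φ.relabel Sum.swap ∈ p ↔ φ.relabel Sum.swap ∈ q)) : p = q := by
  obtain ⟨M, v, rfl⟩ := hp
  obtain ⟨N, w, rfl⟩ := hq
  have hswap : ∀ {P : Theory.ModelType.{u, v, max u v} T} (x : Fin k ⊕ Fin l → P)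
      (ψ : L.Formula (Fin k ⊕ Fin l)),
      ψ ∈ typeOf x ↔ (ψ.relabel Sum.swap).Realize (x ∘ Sum.swap) := by
    intro P x ψ
    rw [Formula.realize_relabel, Function.comp_assoc, Sum.swap_swap_eq, Function.comp_id]
    rfl
  ext ψ
  obtain ⟨χ, hχ, hψχ⟩ := hT l k (ψ.relabel Sum.swap)
  have hequations : ∀ φ, IsEquation T φ →
      (φ.Realize (v ∘ Sum.swap) ↔ φ.Realize (w ∘ Sum.swap)) := fun φ hφ => by
    simpa only [relabel_mem_typeOf] using h φ hφ
  rw [hswap, hswap, hψχ.realize_iff, hψχ.realize_iff]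
  exact hχ.realize_iff hequations

theorem _root_.Monotone.eq_of_periodic {α : Type*} [PartialOrder α] {f : ℕ → α}
    (hf : Monotone f) {n : ℕ} (hn : 0 < n) (hper : Function.Periodic f n) (i j : ℕ) :
    f i = f j := by
  have hle : ∀ i j, f i ≤ f j := fun i j => by
    rw [← hper.nat_mul i j]
    exact hf ((Nat.le_mul_of_pos_right i hn).trans (Nat.le_add_left _ _))
  exact (hle i j).antisymm (hle j i)

theorem equational_isIndiscerniblyAcyclic {k l : ℕ}
    (heq : IsEquational T) (n : ℕ) (hn : 0 < n)
    (p : ℕ → Set (L.Formula (Fin k ⊕ Fin l)))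
    (hreal : ∀ i, IsRealizedType T (p i))
    (hper : ∀ i, p (i + n) = p i)
    (hcyc : ∀ i, Pf T (p i) (p (i + 1))) :
    ∀ i j, p i = p j := by
  intro i j
  refine heq.eq_of_relabel_swap_mem_iff (hreal i) (hreal j) fun φ hφ => Iff.of_eq ?_
  have hmono : Monotone fun i => φ.relabel Sum.swap ∈ p i :=
    monotone_nat_of_le_succ fun i => (hcyc i).relabel_swap_mem hφ
  exact hmono.eq_of_periodic hn (Function.Periodic.comp hper (φ.relabel Sum.swap ∈ ·)) i j

end Equationality
end
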